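/- The matrices A_odd A_ev and A_ev A_odd on ℂ^{(S_N)^M} (M even) are given by (A_odd A_ev)(σ, τ) = D^{-(1-1/M)} if σ 𝒲 τ and 0 otherwise, and (A_ev A_odd)(σ, τ) = D^{-(1-1/M)} if τ 𝒲 σ and 0 otherwise, where D = |S_N|^M and 𝒲 is the weaving relation σ_1^{-1}σ_M τ_M^{-1}τ_{M-1} ⋯ τ_2^{-1}τ_1 = e. In particular A_ev A_odd = (A_odd A_ev)*. -/

import Mathlib

open scoped Classical Matrix

/-- σ ∼_ev τ : the even-indexed transitions σ_m⁻¹ σ_{m−1} agree (cyclic indices). -/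
def evRel {N M : ℕ} (σ τ : ZMod M → Equiv.Perm (Fin N)) : Prop :=
  ∀ m : ZMod M, Even m → (σ m)⁻¹ * σ (m - 1) = (τ m)⁻¹ * τ (m - 1)

/-- σ ∼_odd τ : the odd-indexed transitions agree. -/
def oddRel {N M : ℕ} (σ τ : ZMod M → Equiv.Perm (Fin N)) : Prop :=
  ∀ m : ZMod M, ¬ Even m → (σ m)⁻¹ * σ (m - 1) = (τ m)⁻¹ * τ (m - 1)

/-- A_ev(σ,τ) = D^{-1/2} if σ ∼_ev τ, else 0, where D = |S_N|^M = (N!)^M. -/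
noncomputable def Aev (N M : ℕ) :
    Matrix (ZMod M → Equiv.Perm (Fin N)) (ZMod M → Equiv.Perm (Fin N)) ℂ :=
  Matrix.of fun σ τ =>
    if evRel σ τ then ((((Nat.factorial N : ℝ) ^ M) ^ (-(1/2) : ℝ) : ℝ) : ℂ) else 0

/-- A_odd(σ,τ) = D^{-1/2} if σ ∼_odd τ, else 0. -/
noncomputable def Aodd (N M : ℕ) :
    Matrix (ZMod M → Equiv.Perm (Fin N)) (ZMod M → Equiv.Perm (Fin N)) ℂ :=
  Matrix.of fun σ τ =>
    if oddRel σ τ then ((((Nat.factorial N : ℝ) ^ M) ^ (-(1/2) : ℝ) : ℝ) : ℂ) else 0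

/-- The weaving relation σ 𝒲 τ: the alternating product of the odd transitions
of σ and the even transitions of τ over the cyclic index sequence 1, M, …, 2
is the identity. -/
def weave {N M : ℕ} (σ τ : ZMod M → Equiv.Perm (Fin N)) : Prop :=
  ((List.range M).map fun i =>
      if ((1 - (i : ZMod M)).val % 2 = 1)
      then (σ (1 - (i : ZMod M)))⁻¹ * σ (1 - (i : ZMod M) - 1)
      else (τ (1 - (i : ZMod M)))⁻¹ * τ (1 - (i : ZMod M) - 1)).prod = 1

section Aux
variable {M : ℕ} [NeZero M] {G : Type*} [Group G]

/-- Partial product of transitions along the cyclic index sequence 1, 0, -1, …. -/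
def pProd (t : ZMod M → G) (k : ℕ) : G :=
  ((List.range k).map fun i => t (1 - (i : ZMod M))).prod

lemma pProd_zero (t : ZMod M → G) : pProd t 0 = 1 := rfl

lemma pProd_succ (t : ZMod M → G) (k : ℕ) :
    pProd t (k + 1) = pProd t k * t (1 - (k : ZMod M)) := by
  simp [pProd, List.range_succ]

/-- μ has transition data t. -/
def Fits (μ t : ZMod M → G) : Prop :=
  ∀ m : ZMod M, (μ m)⁻¹ * μ (m - 1) = t m

lemma Fits.eval {μ t : ZMod M → G} (h : Fits μ t) (k : ℕ) :
    μ (1 - (k : ZMod M)) = μ 1 * pProd t k := by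
  induction k with
  | zero => simp [pProd_zero]
  | succ k ih =>
    have h1 : (1 : ZMod M) - ((k + 1 : ℕ) : ZMod M) = (1 - (k : ZMod M)) - 1 := by
      push_cast; ring
    have h2 : μ ((1 - (k : ZMod M)) - 1) = μ (1 - (k : ZMod M)) * t (1 - (k : ZMod M)) := by
      rw [← h (1 - (k : ZMod M))]; group
    rw [h1, h2, ih, pProd_succ, mul_assoc]

lemma Fits.prod_eq_one {μ t : ZMod M → G} (h : Fits μ t) : pProd t M = 1 := by
  have := h.eval M
  rw [ZMod.natCast_self, sub_zero] at this
  exact (mul_eq_left.mp this.symm)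

/-- Build μ with given transitions and base value a = μ 1. -/
def build (t : ZMod M → G) (a : G) : ZMod M → G :=
  fun m => a * pProd t ((1 - m).val)

lemma build_one (t : ZMod M → G) (a : G) : build t a 1 = a := by
  simp [build, pProd_zero]

lemma natCast_val_eq (m : ZMod M) : ((m.val : ℕ) : ZMod M) = m := by
  rw [ZMod.natCast_val, ZMod.cast_id]

lemma build_fits {t : ZMod M → G} (ht : pProd t M = 1) (a : G) :
    Fits (build t a) t := by
  intro m
  obtain ⟨i, hidef⟩ : ∃ i, (1 - m).val = i := ⟨_, rfl⟩
  have hiM : i < M := hidef ▸ ZMod.val_lt _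
  have hm : (1 : ZMod M) - (i : ZMod M) = m := by
    rw [← hidef, natCast_val_eq]; ring
  have hm1 : (1 : ZMod M) - m = (i : ZMod M) := by rw [← hidef, natCast_val_eq]
  have hm2 : (1 : ZMod M) - (m - 1) = ((i + 1 : ℕ) : ZMod M) := by
    push_cast; rw [← hm1]; ring
  have hval : ((1 : ZMod M) - (m - 1)).val = (i + 1) % M := by
    rw [hm2, ZMod.val_natCast]
  show (a * pProd t ((1 - m).val))⁻¹ * (a * pProd t ((1 - (m - 1)).val)) = t m
  rw [hidef, hval]
  rcases lt_or_eq_of_le (Nat.succ_le_of_lt hiM) with hlt | heq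
  · rw [Nat.mod_eq_of_lt hlt, pProd_succ, hm]; group
  · have h0 : (i + 1) % M = 0 := by rw [← heq]; exact Nat.mod_self _
    have hP : pProd t i * t m = 1 := by
      rw [← hm, ← pProd_succ, show i + 1 = M from heq]; exact ht
    rw [h0, pProd_zero, mul_one]
    have hg : (a * pProd t i)⁻¹ * a = (pProd t i)⁻¹ := by group
    rw [hg]
    exact inv_eq_of_mul_eq_one_right hP

lemma Fits.eq_build {μ t : ZMod M → G} (h : Fits μ t) : μ = build t (μ 1) := by
  funext m
  have hm : (1 : ZMod M) - (((1 - m).val : ℕ) : ZMod M) = m := by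
    rw [natCast_val_eq]; ring
  have := h.eval ((1 - m).val)
  rw [hm] at this
  exact this

lemma card_fits {N : ℕ} (t : ZMod M → Equiv.Perm (Fin N)) :
    (Finset.univ.filter fun μ : ZMod M → Equiv.Perm (Fin N) => Fits μ t).card
      = if pProd t M = 1 then N.factorial else 0 := by
  split_ifs with h
  · have : (Finset.univ.filter fun μ : ZMod M → Equiv.Perm (Fin N) => Fits μ t).card
        = (Finset.univ : Finset (Equiv.Perm (Fin N))).card := by
      apply Finset.card_bij (fun μ _ => μ 1)
      · intro μ _; exact Finset.mem_univ _
      · intro μ hμ μ' hμ' hh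
        simp only [Finset.mem_filter] at hμ hμ'
        rw [hμ.2.eq_build, hμ'.2.eq_build, hh]
      · intro a _
        refine ⟨build t a, ?_, build_one t a⟩
        simp only [Finset.mem_filter]
        exact ⟨Finset.mem_univ _, build_fits h a⟩
    rw [this, Finset.card_univ, Fintype.card_perm, Fintype.card_fin]
  · rw [Finset.card_eq_zero, Finset.filter_eq_empty_iff]
    intro μ _
    exact fun hf => h hf.prod_eq_one

end Aux

/- auxiliary material for the main theorem -/

/-- Parity of a ZMod M element is parity of its value, when M is even. -/
lemma even_zmod_iff {M : ℕ} [NeZero M] (hMe : Even M) (m : ZMod M) :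
    Even m ↔ m.val % 2 = 0 := by
  obtain ⟨c, hc⟩ := hMe
  constructor
  · rintro ⟨k, rfl⟩
    have h1 : (k + k).val = (k.val + k.val) % M := ZMod.val_add k k
    have h2 : (2 : ℕ) ∣ M := ⟨c, by omega⟩
    rw [h1, Nat.mod_mod_of_dvd _ h2]
    omega
  · intro h
    obtain ⟨k, hk⟩ : 2 ∣ m.val := Nat.dvd_of_mod_eq_zero h
    refine ⟨(k : ZMod M), ?_⟩
    have : ((m.val : ℕ) : ZMod M) = m := natCast_val_eq m
    rw [← this, hk]
    push_cast; ring

/-- Transition data: odd indices from σ, even indices from τ. -/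
def T {N M : ℕ} (σ τ : ZMod M → Equiv.Perm (Fin N)) : ZMod M → Equiv.Perm (Fin N) :=
  fun m => if m.val % 2 = 1 then (σ m)⁻¹ * σ (m - 1) else (τ m)⁻¹ * τ (m - 1)

lemma weave_iff_pProd {N M : ℕ} [NeZero M] (σ τ : ZMod M → Equiv.Perm (Fin N)) :
    weave σ τ ↔ pProd (T σ τ) M = 1 := by
  unfold weave pProd T
  constructor <;> intro h <;> convert h using 3 <;>
    · funext i; split_ifs <;> rfl

lemma fits_iff {N M : ℕ} [NeZero M] (hMe : Even M)
    (σ τ μ : ZMod M → Equiv.Perm (Fin N)) :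
    (oddRel σ μ ∧ evRel μ τ) ↔ Fits μ (T σ τ) := by
  constructor
  · rintro ⟨ho, he⟩ m
    by_cases h : m.val % 2 = 1
    · have hodd : ¬ Even m := by rw [even_zmod_iff hMe]; omega
      rw [T, if_pos h, ← ho m hodd]
    · have hev : Even m := by rw [even_zmod_iff hMe]; omega
      rw [T, if_neg h, he m hev]
  · intro hf
    constructor
    · intro m hodd
      have h : m.val % 2 = 1 := by
        rw [even_zmod_iff hMe] at hodd; omega
      have := hf m
      rw [T, if_pos h] at this
      rw [this]
    · intro m hev
      have h : ¬ m.val % 2 = 1 := by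
        rw [even_zmod_iff hMe] at hev; omega
      have := hf m
      rw [T, if_neg h] at this
      rw [this]

lemma const_arith (N M : ℕ) (hM : 1 ≤ M) :
    (N.factorial : ℝ) *
      (((N.factorial : ℝ) ^ M) ^ (-(1/2) : ℝ) * ((N.factorial : ℝ) ^ M) ^ (-(1/2) : ℝ))
      = ((N.factorial : ℝ) ^ M) ^ (-(1 - (M : ℝ)⁻¹)) := by
  have hx : (0 : ℝ) < N.factorial := by exact_mod_cast N.factorial_pos
  have hy : (0 : ℝ) < (N.factorial : ℝ) ^ M := by positivity
  have hMne : (M : ℝ) ≠ 0 := by positivity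
  have h2 : ((N.factorial : ℝ) ^ M) ^ ((M : ℝ)⁻¹) = N.factorial := by
    rw [← Real.rpow_natCast (N.factorial : ℝ) M, ← Real.rpow_mul hx.le,
      mul_inv_cancel₀ hMne, Real.rpow_one]
  rw [← Real.rpow_add hy, show (-(1/2 : ℝ)) + -(1/2) = -1 by norm_num,
    show -(1 - (M : ℝ)⁻¹) = (M : ℝ)⁻¹ + (-1) by ring, Real.rpow_add hy, h2]

lemma fits_iff' {N M : ℕ} [NeZero M] (hMe : Even M)
    (σ τ μ : ZMod M → Equiv.Perm (Fin N)) :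
    (evRel σ μ ∧ oddRel μ τ) ↔ Fits μ (T τ σ) := by
  constructor
  · rintro ⟨he, ho⟩ m
    by_cases h : m.val % 2 = 1
    · have hodd : ¬ Even m := by rw [even_zmod_iff hMe]; omega
      rw [T, if_pos h]; exact ho m hodd
    · have hev : Even m := by rw [even_zmod_iff hMe]; omega
      rw [T, if_neg h]; exact (he m hev).symm
  · intro hf
    refine ⟨fun m hev => ?_, fun m hodd => ?_⟩
    · have h : ¬ m.val % 2 = 1 := by rw [even_zmod_iff hMe] at hev; omega
      have := hf m; rw [T, if_neg h] at this; rw [this]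
    · have h : m.val % 2 = 1 := by rw [even_zmod_iff hMe] at hodd; omega
      have := hf m; rw [T, if_pos h] at this; rw [this]

/-- A_odd A_ev and A_ev A_odd are D^{-(1-1/M)} times the indicator matrices of
the weaving relation and its transpose; in particular A_ev A_odd = (A_odd A_ev)ᴴ. -/
theorem Aodd_mul_Aev_eq_weaving (N M : ℕ) [NeZero M] (hN : 1 ≤ N) (hM : 2 ≤ M)
    (hMe : Even M) :
    Aodd N M * Aev N M = Matrix.of (fun σ τ =>
        if weave σ τ
        then ((((Nat.factorial N : ℝ) ^ M) ^ (-(1 - (M : ℝ)⁻¹)) : ℝ) : ℂ) else 0) ∧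
    Aev N M * Aodd N M = Matrix.of (fun σ τ =>
        if weave τ σ
        then ((((Nat.factorial N : ℝ) ^ M) ^ (-(1 - (M : ℝ)⁻¹)) : ℝ) : ℂ) else 0) ∧
    Aev N M * Aodd N M = (Aodd N M * Aev N M)ᴴ := by
  have hM1 : 1 ≤ M := le_trans (by norm_num) hM
  set c : ℝ := ((Nat.factorial N : ℝ) ^ M) ^ (-(1/2) : ℝ) with hc
  set r : ℝ := ((Nat.factorial N : ℝ) ^ M) ^ (-(1 - (M : ℝ)⁻¹)) with hr
  have key : ∀ σ τ : ZMod M → Equiv.Perm (Fin N),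
      (∑ μ : ZMod M → Equiv.Perm (Fin N),
        (if oddRel σ μ then (c : ℂ) else 0) * (if evRel μ τ then (c : ℂ) else 0))
        = if weave σ τ then (r : ℂ) else 0 := by
    intro σ τ
    have hsum : ∀ μ : ZMod M → Equiv.Perm (Fin N),
        (if oddRel σ μ then (c : ℂ) else 0) * (if evRel μ τ then (c : ℂ) else 0)
          = if Fits μ (T σ τ) then (c : ℂ) * c else 0 := by
      intro μ
      rw [← fits_iff hMe σ τ μ]
      by_cases h1 : oddRel σ μ <;> by_cases h2 : evRel μ τ <;>
        simp [h1, h2]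
    rw [Finset.sum_congr rfl fun μ _ => hsum μ, Finset.sum_ite, Finset.sum_const,
      Finset.sum_const_zero, add_zero, card_fits]
    by_cases h : weave σ τ
    · rw [if_pos ((weave_iff_pProd σ τ).mp h), if_pos h, nsmul_eq_mul]
      push_cast
      rw [← mul_assoc]
      norm_cast
      rw [mul_assoc, hc, hr]
      exact const_arith N M hM1
    · rw [if_neg (fun hp => h ((weave_iff_pProd σ τ).mpr hp)), if_neg h]
      simp
  have key2 : ∀ σ τ : ZMod M → Equiv.Perm (Fin N),
      (∑ μ : ZMod M → Equiv.Perm (Fin N),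
        (if evRel σ μ then (c : ℂ) else 0) * (if oddRel μ τ then (c : ℂ) else 0))
        = if weave τ σ then (r : ℂ) else 0 := by
    intro σ τ
    have hsum : ∀ μ : ZMod M → Equiv.Perm (Fin N),
        (if evRel σ μ then (c : ℂ) else 0) * (if oddRel μ τ then (c : ℂ) else 0)
          = if Fits μ (T τ σ) then (c : ℂ) * c else 0 := by
      intro μ
      rw [← fits_iff' hMe σ τ μ]
      by_cases h1 : evRel σ μ <;> by_cases h2 : oddRel μ τ <;>
        simp [h1, h2]
    rw [Finset.sum_congr rfl fun μ _ => hsum μ, Finset.sum_ite, Finset.sum_const,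
      Finset.sum_const_zero, add_zero, card_fits]
    by_cases h : weave τ σ
    · rw [if_pos ((weave_iff_pProd τ σ).mp h), if_pos h, nsmul_eq_mul]
      push_cast
      rw [← mul_assoc]
      norm_cast
      rw [mul_assoc, hc, hr]
      exact const_arith N M hM1
    · rw [if_neg (fun hp => h ((weave_iff_pProd τ σ).mpr hp)), if_neg h]
      simp
  have eq1 : Aodd N M * Aev N M = Matrix.of (fun σ τ =>
      if weave σ τ then ((r : ℝ) : ℂ) else 0) := by
    ext σ τ
    rw [Matrix.mul_apply, Matrix.of_apply]
    exact key σ τ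
  have eq2 : Aev N M * Aodd N M = Matrix.of (fun σ τ =>
      if weave τ σ then ((r : ℝ) : ℂ) else 0) := by
    ext σ τ
    rw [Matrix.mul_apply, Matrix.of_apply]
    exact key2 σ τ
  refine ⟨eq1, eq2, ?_⟩
  rw [eq1, eq2]
  ext σ τ
  simp only [Matrix.conjTranspose_apply, Matrix.of_apply]
  split_ifs <;> simp [Complex.star_def, Complex.conj_ofReal]
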